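/- Let ζ be a primitive l-th root of unity (l ≥ 1) in ℂ, and let a, b be integers. For an integer m, let F(m) = ζ^{(m+1)^2} + ζ^{(m-1)^2} - 2ζ^{m^2}. Then the alternating sum ∑_{S ⊆ {1,...,l}} (-1)^{l-|S|} ζ^{Σ(S) - b|S|} F(a + |S|) equals zero, where Σ(S) denotes the sum of the elements of S. -/

import Mathlib

open Finset

/-- For `ζ ∈ ℂ`, `F(m) = ζ^{(m+1)²} + ζ^{(m-1)²} - 2ζ^{m²}`. -/
noncomputable def F (ζ : ℂ) (m : ℤ) : ℂ :=
    ζ ^ ((m + 1) ^ 2) + ζ ^ ((m - 1) ^ 2) - 2 * ζ ^ (m ^ 2)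

open Polynomial in
lemma aux_prod_Icc_X_add_C {l : ℕ} (hl : 1 ≤ l) {ζ : ℂ} (hζ : IsPrimitiveRoot ζ l) :
    ∏ i ∈ Icc 1 l, (X + C (ζ ^ i)) = X ^ l - C ((-1 : ℂ) ^ l) := by
  have hpos : 0 < l := hl
  have hmod : ∀ m, 1 ≤ m → m ≤ l → ζ ^ m = ζ ^ (m % l) := by
    intro m h1 h2
    rcases eq_or_lt_of_le h2 with rfl | h
    · simp [Nat.mod_self, hζ.pow_eq_one]
    · rw [Nat.mod_eq_of_lt h]
  have hinj : Set.InjOn (fun i => ζ ^ i) (Icc 1 l) := by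
    intro i hi j hj hij
    simp only [Finset.coe_Icc, Set.mem_Icc] at hi hj
    have h1 : i % l = j % l := hζ.pow_inj (Nat.mod_lt _ hpos) (Nat.mod_lt _ hpos)
      (by rw [← hmod i hi.1 hi.2, ← hmod j hj.1 hj.2]; exact hij)
    by_cases hil : i = l <;> by_cases hjl : j = l
    · omega
    · rw [hil, Nat.mod_self, Nat.mod_eq_of_lt (by omega : j < l)] at h1; omega
    · rw [hjl, Nat.mod_self, Nat.mod_eq_of_lt (by omega : i < l)] at h1; omega
    · rwa [Nat.mod_eq_of_lt (by omega : i < l), Nat.mod_eq_of_lt (by omega : j < l)] at h1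
  have himg : (Icc 1 l).image (fun i => ζ ^ i) = nthRootsFinset l (1 : ℂ) := by
    apply Finset.eq_of_subset_of_card_le
    · intro x hx
      simp only [Finset.mem_image] at hx
      obtain ⟨i, -, rfl⟩ := hx
      exact (Polynomial.mem_nthRootsFinset hpos (1 : ℂ)).2
        (by rw [← pow_mul, mul_comm, pow_mul, hζ.pow_eq_one, one_pow])
    · rw [hζ.card_nthRootsFinset, Finset.card_image_of_injOn hinj, Nat.card_Icc]
      omega
  have hQ : ∏ i ∈ Icc 1 l, (X - C (ζ ^ i)) = X ^ l - 1 := by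
    rw [X_pow_sub_one_eq_prod hpos hζ, ← himg,
      Finset.prod_image fun x hx y hy h => hinj hx hy h]
  have hcard : #(Icc 1 l) = l := by rw [Nat.card_Icc]; omega
  have hcomp : ((X : ℂ[X]) ^ l - 1).comp (-X) =
      (-1 : ℂ[X]) ^ l * ∏ i ∈ Icc 1 l, (X + C (ζ ^ i)) := by
    rw [← hQ, Polynomial.prod_comp,
      show ((-1 : ℂ[X]) ^ l) = ∏ _i ∈ Icc 1 l, (-1 : ℂ[X]) by
        rw [Finset.prod_const, hcard],
      ← Finset.prod_mul_distrib]
    apply Finset.prod_congr rfl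
    intro i _
    simp only [sub_comp, X_comp, C_comp]
    ring
  have hcomp' : ((X : ℂ[X]) ^ l - 1).comp (-X) = (-1 : ℂ[X]) ^ l * X ^ l - 1 := by
    simp only [sub_comp, pow_comp, X_comp, one_comp]
    rw [neg_pow]
  have hone : (-1 : ℂ[X]) ^ l * (-1 : ℂ[X]) ^ l = 1 := by
    rw [← mul_pow]; norm_num
  have := hcomp.symm.trans hcomp'
  calc ∏ i ∈ Icc 1 l, (X + C (ζ ^ i))
      = (-1 : ℂ[X]) ^ l * ((-1 : ℂ[X]) ^ l * ∏ i ∈ Icc 1 l, (X + C (ζ ^ i))) := by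
        rw [← mul_assoc, hone, one_mul]
    _ = (-1 : ℂ[X]) ^ l * ((-1 : ℂ[X]) ^ l * X ^ l - 1) := by rw [this]
    _ = X ^ l - C ((-1 : ℂ) ^ l) := by
        rw [mul_sub, ← mul_assoc, hone, one_mul, mul_one, map_pow, map_neg, map_one]

open Polynomial in
lemma aux_esymm_eq {l : ℕ} (hl : 1 ≤ l) {ζ : ℂ} (hζ : IsPrimitiveRoot ζ l) {k : ℕ}
    (hk : k ≤ l) :
    ∑ t ∈ powersetCard k (Icc 1 l), ∏ i ∈ t, ζ ^ i =
      ((X : ℂ[X]) ^ l - C ((-1 : ℂ) ^ l)).coeff (l - k) := by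
  have hcard : #(Icc 1 l) = l := by rw [Nat.card_Icc]; omega
  rw [← aux_prod_Icc_X_add_C hl hζ,
    Finset.prod_X_add_C_coeff _ _ (by rw [hcard]; omega : l - k ≤ #(Icc 1 l)),
    hcard, Nat.sub_sub_self hk]

/-- Lemma 1 of Lawrence–Ron (key computation): for `ζ` a primitive `l`-th root of
unity and integers `a`, `b`, the alternating sum
`∑_{S ⊆ {1,…,l}} (-1)^{l-|S|} ζ^{Σ(S) - b|S|} F(a + |S|)` vanishes. -/
theorem lemma1_sum_vanishes (l : ℕ) (hl : 1 ≤ l) (ζ : ℂ)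
    (hζ : IsPrimitiveRoot ζ l) (a b : ℤ) :
    ∑ S ∈ (Icc 1 l).powerset,
      (-1 : ℂ) ^ (l - S.card) * ζ ^ ((∑ s ∈ S, (s : ℤ)) - b * S.card) *
        F ζ (a + S.card) = 0 := by
  have hl0 : l ≠ 0 := by omega
  have hz0 : ζ ≠ 0 := hζ.ne_zero hl0
  have hzl : ζ ^ (l : ℤ) = 1 := by rw [zpow_natCast, hζ.pow_eq_one]
  have hper : ∀ m : ℤ, ζ ^ ((m + l) ^ 2) = ζ ^ (m ^ 2) := by
    intro m
    rw [show ((m + l) ^ 2 : ℤ) = m ^ 2 + l * (2 * m + l) by ring,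
      zpow_add₀ hz0, zpow_mul, hzl, one_zpow, mul_one]
  have hF : F ζ (a + l) = F ζ a := by
    unfold F
    rw [show (a + l + 1 : ℤ) = (a + 1) + l by ring,
      show (a + l - 1 : ℤ) = (a - 1) + l by ring, hper, hper, hper]
  have hcard : #(Icc 1 l) = l := by rw [Nat.card_Icc]; omega
  rw [Finset.sum_powerset, hcard]
  have hterm : ∀ k ∈ range (l + 1),
      (∑ S ∈ powersetCard k (Icc 1 l),
        (-1 : ℂ) ^ (l - S.card) * ζ ^ ((∑ s ∈ S, (s : ℤ)) - b * S.card) *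
          F ζ (a + S.card)) =
      ((-1 : ℂ) ^ (l - k) * ζ ^ (-(b * k)) * F ζ (a + k)) *
        ∑ t ∈ powersetCard k (Icc 1 l), ∏ i ∈ t, ζ ^ i := by
    intro k _
    rw [Finset.mul_sum]
    apply Finset.sum_congr rfl
    intro S hS
    have hSc : S.card = k := (Finset.mem_powersetCard.1 hS).2
    have hzS : ζ ^ ((∑ s ∈ S, (s : ℤ)) - b * k) = (∏ i ∈ S, ζ ^ i) * ζ ^ (-(b * k)) := by
      rw [sub_eq_add_neg, zpow_add₀ hz0]
      congr 1
      rw [← Nat.cast_sum, zpow_natCast, Finset.prod_pow_eq_pow_sum]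
    rw [hSc, hzS]
    ring
  rw [Finset.sum_congr rfl hterm]
  have hrange : range (l + 1) = insert 0 (insert l (Ioo 0 l)) := by
    ext x
    simp only [mem_range, mem_insert, mem_Ioo]
    omega
  rw [hrange, Finset.sum_insert (by simp only [mem_insert, mem_Ioo]; omega),
    Finset.sum_insert (by simp only [mem_Ioo]; omega)]
  have hmid : ∑ k ∈ Ioo 0 l,
      ((-1 : ℂ) ^ (l - k) * ζ ^ (-(b * k)) * F ζ (a + k)) *
        ∑ t ∈ powersetCard k (Icc 1 l), ∏ i ∈ t, ζ ^ i = 0 := by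
    apply Finset.sum_eq_zero
    intro k hk
    rw [mem_Ioo] at hk
    rw [aux_esymm_eq hl hζ (le_of_lt hk.2), Polynomial.coeff_sub,
      Polynomial.coeff_X_pow, Polynomial.coeff_C, if_neg (by omega), if_neg (by omega)]
    simp
  rw [hmid, add_zero]
  have he0 : ∑ t ∈ powersetCard 0 (Icc 1 l), ∏ i ∈ t, ζ ^ i = 1 := by
    rw [aux_esymm_eq hl hζ (Nat.zero_le l), Nat.sub_zero, Polynomial.coeff_sub,
      Polynomial.coeff_X_pow, Polynomial.coeff_C, if_pos rfl, if_neg hl0]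
    norm_num
  have hel : ∑ t ∈ powersetCard l (Icc 1 l), ∏ i ∈ t, ζ ^ i = -(-1 : ℂ) ^ l := by
    rw [aux_esymm_eq hl hζ le_rfl, Nat.sub_self, Polynomial.coeff_sub,
      Polynomial.coeff_X_pow, Polynomial.coeff_C, if_neg (by omega), if_pos rfl]
    norm_num
  rw [he0, hel]
  have hbl : ζ ^ (-(b * (l : ℤ))) = 1 := by
    rw [show (-(b * (l : ℤ)) : ℤ) = (l : ℤ) * (-b) by ring, zpow_mul, hzl, one_zpow]
  have h0 : ζ ^ (-(b * ((0 : ℕ) : ℤ))) = 1 := by norm_num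
  rw [h0, hbl, hF]
  push_cast
  ring_nf
  simp [Nat.sub_self]
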